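/- arXiv:1701.05091 — 2 statements merged into one kernel-verified Lean document; each statement's English description precedes it below -/
import Mathlib

section
/- Let m ~ N(0,1) and a > 0. The equation E[|a·m|^α] = 1, i.e. a^α · 2^{α/2} Γ((α+1)/2)/√π = 1, has a (unique) solution α > 0 if and only if a < exp((1/2)(-ψ(1) + log 2)), where ψ is the digamma function. -/
/-!
Put `L(α) = log E|a m|^α = α log a + (α / 2) log 2 + log Γ((α + 1) / 2) - log √π`.
Then `L` is convex (Γ is log-convex), `L 0 = 0`, `L'(0) = log a - (γ + log 2) / 2`
(from `Γ'(1/2) = -√π (γ + 2 log 2)`), and `L (2n + 1) = log n! + O(n)` becomes positive.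
A convex function on `[0, ∞)` that vanishes at `0` and is somewhere positive has exactly one
positive zero iff its derivative `d` at `0` is negative. If `d ≥ 0`, then `f ≥ d x ≥ 0`, so a
positive zero `r` forces `d = 0` and `f = 0` on all of `[0, r]`. If `d < 0`, then `f` dips below
zero, and once a convex function has crossed zero upwards it stays positive.
-/

open MeasureTheory Real Set Filter Topology ProbabilityTheory
open scoped Nat

theorem ConvexOn.pos_of_neg_of_eq_zero {𝕜 : Type*} [Field 𝕜] [LinearOrder 𝕜]
    [IsStrictOrderedRing 𝕜] {s : Set 𝕜} {f : 𝕜 → 𝕜} (hf : ConvexOn 𝕜 s f) {x y z : 𝕜}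
    (hx : x ∈ s) (hz : z ∈ s) (hxy : x < y) (hyz : y < z) (hfx : f x < 0) (hfy : f y = 0) :
    0 < f z := by
  have hslope := hf.slope_mono_adjacent hx hz hxy hyz
  rw [hfy, zero_sub, sub_zero] at hslope
  have : 0 < -f x / (y - x) := div_pos (neg_pos.2 hfx) (sub_pos.2 hxy)
  exact (div_pos_iff_of_pos_right (sub_pos.2 hyz)).1 (this.trans_le hslope)

theorem HasDerivAt.eventually_nhdsGT_neg {f : ℝ → ℝ} {d x : ℝ} (hd : HasDerivAt f d x)
    (hfx : f x = 0) (hneg : d < 0) : ∀ᶠ y in 𝓝[>] x, f y < 0 := by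
  filter_upwards [(hasDerivAt_iff_tendsto_slope.1 hd).mono_left (nhdsGT_le_nhdsNE x)
    |>.eventually (eventually_lt_nhds hneg), self_mem_nhdsWithin] with y hy (hxy : x < y)
  rwa [slope_def_field, hfx, sub_zero, div_lt_iff₀ (sub_pos.2 hxy), zero_mul] at hy

section

variable {f : ℝ → ℝ} {d : ℝ}

theorem ConvexOn.deriv_neg_of_existsUnique_pos_eq_zero (hf : ConvexOn ℝ (Ici 0) f)
    (h0 : f 0 = 0) (hd : HasDerivAt f d 0) (hroot : ∃! x, 0 < x ∧ f x = 0) : d < 0 := by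
  obtain ⟨r, ⟨hr, hfr⟩, huniq⟩ := hroot
  have hslope : ∀ x, 0 < x → d ≤ f x / x := fun x hx => by
    simpa [slope_def_field, h0] using
      hf.le_slope_of_hasDerivAt self_mem_Ici hx.le hx hd
  refine (by simpa [hfr] using hslope r hr : d ≤ 0).lt_of_ne fun hd0 => ?_
  have hmid : f (r / 2) ≤ 0 := by
    simpa [h0, hfr, div_eq_inv_mul] using
      hf.2 self_mem_Ici hr.le (by norm_num : (0 : ℝ) ≤ 1 / 2) (by norm_num : (0 : ℝ) ≤ 1 / 2)
        (by norm_num)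
  have hmid' : 0 ≤ f (r / 2) := by
    simpa [hd0, le_div_iff₀ (half_pos hr)] using hslope (r / 2) (half_pos hr)
  have := huniq (r / 2) ⟨half_pos hr, hmid.antisymm hmid'⟩
  linarith

theorem ConvexOn.existsUnique_pos_eq_zero_of_deriv_neg (hf : ConvexOn ℝ (Ici 0) f)
    (h0 : f 0 = 0) (hd : HasDerivAt f d 0) (hpos : ∃ x, 0 < x ∧ 0 < f x) (hneg : d < 0) :
    ∃! x, 0 < x ∧ f x = 0 := by
  have hnear := hd.eventually_nhdsGT_neg h0 hneg
  have hcross : ∀ r s, 0 < r → f r = 0 → r < s → f s ≠ 0 := fun r s hr hfr hrs => by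
    obtain ⟨β, hfβ, hβ⟩ := (hnear.and (Ioo_mem_nhdsGT hr)).exists
    exact (hf.pos_of_neg_of_eq_zero hβ.1.le (hr.trans hrs).le hβ.2 hrs hfβ hfr).ne'
  obtain ⟨b, hb, hfb⟩ := hpos
  obtain ⟨β, hfβ, hβ⟩ := (hnear.and (Ioo_mem_nhdsGT hb)).exists
  have hcont : ContinuousOn f (Icc β b) := by
    refine hf.continuousOn_interior.mono fun x hx => ?_
    rw [interior_Ici]
    exact hβ.1.trans_le hx.1
  obtain ⟨r, hr, hfr⟩ := intermediate_value_Icc hβ.2.le hcont ⟨hfβ.le, hfb.le⟩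
  have hr0 : 0 < r := hβ.1.trans_le hr.1
  refine ⟨r, ⟨hr0, hfr⟩, fun s ⟨hs, hfs⟩ => ?_⟩
  rcases lt_trichotomy s r with h | h | h
  · exact absurd hfr (hcross s r hs hfs h)
  · exact h
  · exact absurd hfs (hcross r s hr0 hfr h)

theorem ConvexOn.existsUnique_pos_eq_zero_iff (hf : ConvexOn ℝ (Ici 0) f) (h0 : f 0 = 0)
    (hd : HasDerivAt f d 0) (hpos : ∃ x, 0 < x ∧ 0 < f x) :
    (∃! x, 0 < x ∧ f x = 0) ↔ d < 0 :=
  ⟨hf.deriv_neg_of_existsUnique_pos_eq_zero h0 hd,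
    hf.existsUnique_pos_eq_zero_of_deriv_neg h0 hd hpos⟩

end

theorem tendsto_factorial_mul_pow_atTop {b : ℝ} (hb : 0 < b) :
    Tendsto (fun n : ℕ => n ! * b ^ n) atTop atTop := by
  have h := FloorSemiring.tendsto_pow_div_factorial_atTop b⁻¹
  have hpos : ∀ n : ℕ, 0 < b⁻¹ ^ n / n ! := fun n => by positivity
  convert (tendsto_nhdsWithin_iff.2 ⟨h, Eventually.of_forall hpos⟩).inv_tendsto_nhdsGT_zero
    using 2 with n
  simp [inv_pow, div_eq_mul_inv, mul_comm]

theorem integral_abs_rpow_gaussianReal {q : ℝ} (hq : -1 < q) :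
    ∫ x, |x| ^ q ∂gaussianReal 0 1 = 2 ^ (q / 2) * Gamma ((q + 1) / 2) / √π := by
  have hpdf : ∀ x : ℝ, gaussianPDFReal 0 1 x • |x| ^ q
      = (√(2 * π))⁻¹ * (|x| ^ q * exp (-(1 / 2) * |x| ^ (2 : ℝ))) := fun x => by
    rw [gaussianPDFReal, rpow_two, sq_abs, smul_eq_mul]
    push_cast
    ring_nf
  have hhalf : ((1 : ℝ) / 2) ^ (-(q + 1) / 2) = 2 ^ (q / 2) * √2 := by
    rw [one_div, inv_rpow zero_le_two, ← rpow_neg zero_le_two, sqrt_eq_rpow,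
      ← rpow_add two_pos]
    ring_nf
  rw [integral_gaussianReal_eq_integral_smul one_ne_zero, funext hpdf, integral_const_mul,
    integral_comp_abs (f := fun x => x ^ q * exp (-(1 / 2) * x ^ (2 : ℝ))),
    integral_rpow_mul_exp_neg_mul_rpow two_pos hq one_half_pos, hhalf,
    sqrt_mul zero_le_two]
  field_simp

noncomputable def gaussianLogAbsMoment (a α : ℝ) : ℝ :=
  α * log a + α / 2 * log 2 + log (Gamma ((α + 1) / 2)) - log √π

theorem exp_gaussianLogAbsMoment {a α : ℝ} (ha : 0 < a) (hα : -1 < α) :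
    exp (gaussianLogAbsMoment a α) = ∫ x, |a * x| ^ α ∂gaussianReal 0 1 := by
  have hΓ : 0 < Gamma ((α + 1) / 2) := Gamma_pos_of_pos (by linarith)
  simp_rw [abs_mul, mul_rpow (abs_nonneg a) (abs_nonneg _), integral_const_mul,
    integral_abs_rpow_gaussianReal hα, abs_of_pos ha, gaussianLogAbsMoment, exp_sub, exp_add,
    exp_log hΓ, exp_log (sqrt_pos.2 pi_pos), rpow_def_of_pos ha, rpow_def_of_pos two_pos]
  ring_nf

theorem gaussianLogAbsMoment_zero (a : ℝ) : gaussianLogAbsMoment a 0 = 0 := by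
  norm_num [gaussianLogAbsMoment, Gamma_one_half_eq]

theorem convexOn_gaussianLogAbsMoment (a : ℝ) :
    ConvexOn ℝ (Ioi (-1)) (gaussianLogAbsMoment a) := by
  have hmap : ∀ α : ℝ, AffineMap.lineMap (1 / 2 : ℝ) 1 α = (α + 1) / 2 := fun α => by
    rw [AffineMap.lineMap_apply, smul_eq_mul, vsub_eq_sub, vadd_eq_add]
    ring
  have hΓ : ConvexOn ℝ (Ioi (-1)) fun α : ℝ => log (Gamma ((α + 1) / 2)) := by
    have h := convexOn_log_Gamma.comp_affineMap (AffineMap.lineMap (1 / 2 : ℝ) 1)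
    simp only [Function.comp_def, hmap] at h
    refine h.subset (fun α (hα : -1 < α) => ?_) (convex_Ioi _)
    simp only [mem_preimage, hmap, mem_Ioi]
    linarith
  have hlin : ConvexOn ℝ (Ioi (-1)) fun α : ℝ => α * log a + α / 2 * log 2 - log √π := by
    refine ⟨convex_Ioi _, fun x _ y _ p q _ _ hpq => le_of_eq ?_⟩
    simp only [smul_eq_mul]
    linear_combination (log √π) * hpq
  refine (hΓ.add hlin).congr fun α _ => ?_
  simp only [gaussianLogAbsMoment, Pi.add_apply]
  ring

theorem hasDerivAt_gaussianLogAbsMoment_zero (a : ℝ) :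
    HasDerivAt (gaussianLogAbsMoment a) (log a - (eulerMascheroniConstant + log 2) / 2) 0 := by
  have hG : HasDerivAt Gamma (-√π * (eulerMascheroniConstant + 2 * log 2)) ((0 + 1) / 2) := by
    rw [zero_add]
    exact hasDerivAt_Gamma_one_half
  have haffine : HasDerivAt (fun α : ℝ => (α + 1) / 2) (1 / 2) 0 :=
    ((hasDerivAt_id' 0).add_const 1).div_const 2
  have hlogΓ := (hG.comp 0 haffine).log
    (by rw [Function.comp_apply, zero_add, Gamma_one_half_eq]; positivity)
  have hlin : HasDerivAt (fun α : ℝ => α * log a + α / 2 * log 2)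
      (1 * log a + 1 / 2 * log 2) 0 :=
    ((hasDerivAt_id' 0).mul_const (log a)).add
      (((hasDerivAt_id' (0 : ℝ)).div_const 2).mul_const (log 2))
  refine ((hlin.add hlogΓ).sub_const (log √π)).congr_deriv ?_
  rw [Function.comp_apply, zero_add, Gamma_one_half_eq]
  field_simp
  ring

theorem exists_pos_gaussianLogAbsMoment_pos (a : ℝ) :
    ∃ α, 0 < α ∧ 0 < gaussianLogAbsMoment a α := by
  obtain ⟨n, hn⟩ := ((tendsto_factorial_mul_pow_atTop (exp_pos (2 * log a + log 2)))
    |>.eventually_gt_atTop (exp (log √π - log a - log 2 / 2))).exists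
  refine ⟨2 * n + 1, by positivity, ?_⟩
  have hlog := log_lt_log (exp_pos _) hn
  rw [log_exp, log_mul (by positivity) (by positivity), log_pow, log_exp] at hlog
  have hΓ : Gamma ((2 * n + 1 + 1) / 2) = n ! := by
    rw [show (2 * (n : ℝ) + 1 + 1) / 2 = n + 1 by ring, Gamma_nat_eq_factorial]
  rw [gaussianLogAbsMoment, hΓ]
  linarith

/-- For `m ~ N(0,1)` and `a > 0`, the equation `E[|a m|^α] = 1` has a unique
positive solution `α` iff `a < exp((1/2)(-ψ(1) + log 2)) = exp((γ + log 2)/2)`. -/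
theorem tail_index_exists_iff (a : ℝ) (ha : 0 < a) :
    (∃! α : ℝ, 0 < α ∧
        ∫ x, |a * x| ^ α ∂(ProbabilityTheory.gaussianReal 0 1) = 1)
      ↔ a < Real.exp ((1 / 2) * (Real.eulerMascheroniConstant + Real.log 2)) := by
  have hmoment : ∀ α : ℝ, 0 < α →
      (∫ x, |a * x| ^ α ∂gaussianReal 0 1 = 1 ↔ gaussianLogAbsMoment a α = 0) :=
    fun α hα => by rw [← exp_gaussianLogAbsMoment ha (by linarith), exp_eq_one_iff]
  have hconv : ConvexOn ℝ (Ici 0) (gaussianLogAbsMoment a) :=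
    (convexOn_gaussianLogAbsMoment a).subset (Ici_subset_Ioi.2 (by norm_num)) (convex_Ici 0)
  calc (∃! α : ℝ, 0 < α ∧ ∫ x, |a * x| ^ α ∂gaussianReal 0 1 = 1)
      ↔ ∃! α : ℝ, 0 < α ∧ gaussianLogAbsMoment a α = 0 :=
        existsUnique_congr fun α => and_congr_right (hmoment α)
    _ ↔ log a - (eulerMascheroniConstant + log 2) / 2 < 0 :=
        hconv.existsUnique_pos_eq_zero_iff (gaussianLogAbsMoment_zero a)
          (hasDerivAt_gaussianLogAbsMoment_zero a) (exists_pos_gaussianLogAbsMoment_pos a)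
    _ ↔ _ := by rw [sub_neg, ← log_lt_iff_lt_exp ha, one_div_mul_eq_div]
end

section
/- Let X, Y be independent nonnegative random variables, X regularly varying: P(X > x) ~ c x^{-α} with c > 0, α > 0, and Y with E[Y^{α+ε}] < ∞ for some ε > 0 and P(Y > 0) > 0. Then P(XY > x) ~ c E[Y^α] x^{-α} as x → ∞ (Breiman's lemma with explicit constant tail). -/
open MeasureTheory Filter ProbabilityTheory Topology Set

/-!
Conditioning on `Y`, independence gives `x^α P(XY > x) = ∫ x^α P(X > x / y) dP_Y(y)`. For each
`y > 0` the integrand equals `y^α (x/y)^α P(X > x/y) → c y^α`, and it vanishes for `y = 0`. Once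
`x` is large it is bounded by `M y^α`: by the tail asymptotics when `x / y` is large, and by
`x^α ≤ (x₀ y)^α` otherwise. Since `E[Y^{α+ε}] < ∞` makes `Y^α` integrable, dominated convergence
gives the limit `c E[Y^α]`.
-/

theorem Real.rpow_le_one_add_rpow {y p q : ℝ} (hy : 0 ≤ y) (hp : 0 ≤ p) (hpq : p ≤ q) :
    y ^ p ≤ 1 + y ^ q := by
  rcases le_total y 1 with hy1 | hy1
  · linarith [Real.rpow_le_one hy hy1 hp, Real.rpow_nonneg hy q]
  · linarith [Real.rpow_le_rpow_of_exponent_le hy1 hpq]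

theorem MeasureTheory.Integrable.rpow_of_le {Ω : Type*} [MeasurableSpace Ω] {μ : Measure Ω}
    [IsFiniteMeasure μ] {f : Ω → ℝ} (hf : Measurable f) (hf0 : ∀ ω, 0 ≤ f ω) {p q : ℝ}
    (hp : 0 ≤ p) (hpq : p ≤ q) (hfq : Integrable (fun ω => f ω ^ q) μ) :
    Integrable (fun ω => f ω ^ p) μ :=
  ((integrable_const 1).add hfq).mono' (hf.pow_const p).aestronglyMeasurable
    (.of_forall fun ω => by
      rw [Real.norm_of_nonneg (Real.rpow_nonneg (hf0 ω) p)]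
      exact Real.rpow_le_one_add_rpow (hf0 ω) hp hpq)

theorem measurableSet_setOf_mul_gt (x : ℝ) : MeasurableSet {p : ℝ × ℝ | p.1 * p.2 > x} :=
  measurableSet_lt measurable_const (measurable_fst.mul measurable_snd)

theorem ProbabilityTheory.IndepFun.measureReal_mul_gt_eq_integral {Ω : Type*}
    [MeasurableSpace Ω] {μ : Measure Ω} [IsFiniteMeasure μ] {X Y : Ω → ℝ} (hX : Measurable X)
    (hY : Measurable Y) (h : IndepFun X Y μ) (x : ℝ) :
    μ.real {ω | X ω * Y ω > x} = ∫ ω, (μ.map X).real {u | u * Y ω > x} ∂μ := by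
  have hslice : Measurable fun y => μ.map X {u | u * y > x} :=
    measurable_measure_prodMk_right (measurableSet_setOf_mul_gt x)
  have hlin : μ {ω | X ω * Y ω > x} = ∫⁻ ω, μ.map X {u | u * Y ω > x} ∂μ := calc
    μ {ω | X ω * Y ω > x} = μ.map (fun ω => (X ω, Y ω)) {p | p.1 * p.2 > x} :=
      (Measure.map_apply (hX.prodMk hY) (measurableSet_setOf_mul_gt x)).symm
    _ = ((μ.map X).prod (μ.map Y)) {p | p.1 * p.2 > x} := by
      rw [(indepFun_iff_map_prod_eq_prod_map_map hX.aemeasurable hY.aemeasurable).mp h]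
    _ = ∫⁻ y, μ.map X {u | u * y > x} ∂(μ.map Y) :=
      Measure.prod_apply_symm (measurableSet_setOf_mul_gt x)
    _ = ∫⁻ ω, μ.map X {u | u * Y ω > x} ∂μ := lintegral_map hslice hY
  rw [measureReal_def, hlin]
  exact (integral_toReal (hslice.comp hY).aemeasurable (.of_forall fun _ => measure_lt_top _ _)).symm

section ScaledTail

variable {m : Measure ℝ} {α c : ℝ}

theorem setOf_mul_gt_eq_Ioi_div {x y : ℝ} (hy : 0 < y) : {u : ℝ | u * y > x} = Ioi (x / y) := by
  ext u
  exact (div_lt_iff₀ hy).symm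

theorem rpow_mul_measureReal_mul_gt_eq {x y : ℝ} (hx : 0 ≤ x) (hy : 0 < y) :
    x ^ α * m.real {u | u * y > x} = y ^ α * ((x / y) ^ α * m.real (Ioi (x / y))) := by
  rw [setOf_mul_gt_eq_Ioi_div hy, Real.div_rpow hx hy.le]
  field_simp

theorem tendsto_rpow_mul_measureReal_mul_gt (hα : 0 < α)
    (hm : Tendsto (fun x => x ^ α * m.real (Ioi x)) atTop (𝓝 c)) {y : ℝ} (hy : 0 ≤ y) :
    Tendsto (fun x => x ^ α * m.real {u | u * y > x}) atTop (𝓝 (c * y ^ α)) := by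
  rcases hy.eq_or_lt with rfl | hy
  · rw [Real.zero_rpow hα.ne', mul_zero]
    refine tendsto_const_nhds.congr' ?_
    filter_upwards [eventually_ge_atTop 0] with x hx
    simp [not_lt.2 hx]
  · rw [mul_comm c]
    refine ((hm.comp (tendsto_id.atTop_div_const hy)).const_mul _).congr' ?_
    filter_upwards [eventually_ge_atTop 0] with x hx
    exact (rpow_mul_measureReal_mul_gt_eq hx hy).symm

theorem exists_rpow_mul_measureReal_mul_gt_le [IsProbabilityMeasure m] (hα : 0 < α)
    (hm : Tendsto (fun x => x ^ α * m.real (Ioi x)) atTop (𝓝 c)) :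
    ∃ x₀ M, ∀ x ≥ x₀, ∀ y ≥ 0, x ^ α * m.real {u | u * y > x} ≤ M * y ^ α := by
  obtain ⟨x₀, hx₀⟩ := ((hm.eventually (eventually_le_nhds (lt_add_one c))).and
    (eventually_gt_atTop 0)).exists_forall_of_atTop
  have hx₀pos : 0 < x₀ := (hx₀ x₀ le_rfl).2
  refine ⟨x₀, max (c + 1) (x₀ ^ α), fun x hx y hy => ?_⟩
  have hxpos : 0 < x := hx₀pos.trans_le hx
  rcases hy.eq_or_lt with rfl | hy
  · simp [not_lt.2 hxpos.le, Real.zero_rpow hα.ne']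
  rcases le_or_gt x₀ (x / y) with hxy | hxy
  · rw [rpow_mul_measureReal_mul_gt_eq hxpos.le hy, mul_comm _ (y ^ α)]
    gcongr
    exact ((hx₀ _ hxy).1).trans (le_max_left _ _)
  · calc x ^ α * m.real {u | u * y > x} ≤ x ^ α * 1 := by gcongr; exact measureReal_le_one
      _ ≤ (x₀ * y) ^ α := by
        rw [mul_one]
        exact Real.rpow_le_rpow hxpos.le ((div_lt_iff₀ hy).mp hxy).le hα.le
      _ = x₀ ^ α * y ^ α := Real.mul_rpow hx₀pos.le hy.le
      _ ≤ max (c + 1) (x₀ ^ α) * y ^ α := by gcongr; exact le_max_right _ _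

end ScaledTail

theorem breiman_general {Ω : Type*} [MeasurableSpace Ω] (μ : Measure Ω) [IsProbabilityMeasure μ]
    (X Y : Ω → ℝ) (hXmeas : Measurable X) (hYmeas : Measurable Y)
    (hYpos : ∀ ω, 0 ≤ Y ω)
    (hindep : ProbabilityTheory.IndepFun X Y μ)
    (c α : ℝ) (hα : 0 < α)
    (hX : Tendsto (fun x : ℝ => x ^ α * (μ {ω | X ω > x}).toReal) atTop (nhds c))
    (ε : ℝ) (hε : 0 < ε)
    (hY : Integrable (fun ω => Y ω ^ (α + ε)) μ) :
    Tendsto (fun x : ℝ => x ^ α * (μ {ω | X ω * Y ω > x}).toReal) atTop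
      (nhds (c * ∫ ω, Y ω ^ α ∂μ)) := by
  set m := μ.map X
  have : IsProbabilityMeasure m := Measure.isProbabilityMeasure_map hXmeas.aemeasurable
  have hm : Tendsto (fun x => x ^ α * m.real (Ioi x)) atTop (𝓝 c) := by
    refine hX.congr fun x => ?_
    rw [map_measureReal_apply hXmeas measurableSet_Ioi]
    rfl
  obtain ⟨x₀, M, hM⟩ := exists_rpow_mul_measureReal_mul_gt_le hα hm
  have hYα : Integrable (fun ω => Y ω ^ α) μ :=
    hY.rpow_of_le hYmeas hYpos hα.le (by linarith)
  have hDCT : Tendsto (fun x => ∫ ω, x ^ α * m.real {u | u * Y ω > x} ∂μ) atTop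
      (𝓝 (∫ ω, c * Y ω ^ α ∂μ)) := by
    refine tendsto_integral_filter_of_dominated_convergence (fun ω => M * Y ω ^ α)
      (.of_forall fun x => ?_) ?_ (hYα.const_mul M)
      (.of_forall fun ω => tendsto_rpow_mul_measureReal_mul_gt hα hm (hYpos ω))
    · exact ((measurable_measure_prodMk_right (measurableSet_setOf_mul_gt x)).comp
        hYmeas).ennreal_toReal.const_mul _ |>.aestronglyMeasurable
    · filter_upwards [eventually_ge_atTop x₀, eventually_ge_atTop 0] with x hx hx0
      refine .of_forall fun ω => ?_
      rw [Real.norm_of_nonneg (by positivity)]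
      exact hM x hx (Y ω) (hYpos ω)
  rw [integral_const_mul] at hDCT
  refine hDCT.congr fun x => ?_
  rw [integral_const_mul, ← hindep.measureReal_mul_gt_eq_integral hXmeas hYmeas]
  rfl

/-- Breiman's lemma with explicit constant: if `X, Y ≥ 0` are independent,
`P(X > x) ~ c x^{-α}` with `c, α > 0`, and `E[Y^{α+ε}] < ∞` for some `ε > 0` with
`P(Y > 0) > 0`, then `P(XY > x) ~ c E[Y^α] x^{-α}`, i.e.
`x^α P(XY > x) → c E[Y^α]`. -/
theorem breiman {Ω : Type*} [MeasurableSpace Ω] (μ : Measure Ω) [IsProbabilityMeasure μ]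
    (X Y : Ω → ℝ) (hXmeas : Measurable X) (hYmeas : Measurable Y)
    (hXpos : ∀ ω, 0 ≤ X ω) (hYpos : ∀ ω, 0 ≤ Y ω)
    (hindep : ProbabilityTheory.IndepFun X Y μ)
    (c α : ℝ) (hc : 0 < c) (hα : 0 < α)
    (hX : Tendsto (fun x : ℝ => x ^ α * (μ {ω | X ω > x}).toReal) atTop (nhds c))
    (ε : ℝ) (hε : 0 < ε)
    (hY : Integrable (fun ω => Y ω ^ (α + ε)) μ)
    (hYnz : 0 < μ {ω | 0 < Y ω}) :
    Tendsto (fun x : ℝ => x ^ α * (μ {ω | X ω * Y ω > x}).toReal) atTop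
      (nhds (c * ∫ ω, Y ω ^ α ∂μ)) :=
  breiman_general μ X Y hXmeas hYmeas hYpos hindep c α hα hX ε hε hY
end
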